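/- Let M be a DFA over a finite alphabet Σ with finitely many states. Then the language accepted by M is bounded if and only if there do NOT exist a state q and words p, u, v, s such that: evaluating M on p from the start state reaches q, reading s from q reaches an accepting state, reading u from q returns to q, reading v from q returns to q, and u, v are prefix-incomparable. -/

import Mathlib

/-!
If prefix-incomparable words `u`, `v` label cycles at a reachable and co-reachable ("useful")
state, the accepted words `p · {u, v}^k · s` are `2^k` distinct words of length `O(k)`, while
`w₁* ⋯ wₙ*` has at most `(N + 1)^n` words of length `≤ N`.

Conversely, if the cycles at each useful state `q` are pairwise prefix-comparable, they are all
powers of the shortest nonempty one, `x_q`. Cutting an accepted run after its last visit to each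
state writes the word as `c₁a₁ c₂a₂ ⋯` with at most `|σ|` blocks, each `cᵢ` a cycle at a useful
state and `aᵢ` a letter or empty. So `L(M) ⊆ (X · Σ^{≤1})^{|σ|}` with `X ⊆ ⋃_q x_q*`, and
bounded languages are closed under products.
-/

open Computability

/-- The product of Kleene stars of singletons `w₁*·w₂*·⋯·wₙ*`. -/
def prodStars {A : Type*} (ws : List (List A)) : Language A :=
  (ws.map fun w => ({w} : Language A)∗).prod

open Filter Asymptotics in
theorem exists_pow_lt_two_pow (a b d : ℕ) : ∃ k : ℕ, (a * k + b) ^ d < 2 ^ k := by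
  have hlin : (fun k : ℕ => ((a * k + b : ℕ) : ℝ)) =O[atTop] (fun k => (k : ℝ)) := by
    refine IsBigO.of_bound (a + b) ?_
    filter_upwards [eventually_ge_atTop 1] with k hk
    have : (1 : ℝ) ≤ k := by exact_mod_cast hk
    rw [Real.norm_natCast, Real.norm_natCast]
    push_cast
    nlinarith
  have hexp := (hlin.pow d).trans_isLittleO
    (isLittleO_pow_const_const_pow_of_one_lt (R := ℝ) d one_lt_two)
  obtain ⟨k, hk⟩ := (hexp.bound one_half_pos).exists
  refine ⟨k, ?_⟩
  have hpos : (0 : ℝ) < 2 ^ k := by positivity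
  rw [norm_pow, Real.norm_natCast, norm_pow, Real.norm_ofNat] at hk
  exact_mod_cast (hk.trans_lt (by linarith) : ((a * k + b : ℕ) : ℝ) ^ d < 2 ^ k)

section Words

variable {A : Type*}

theorem length_flatten_map_cond_le (u v : List A) (b : List Bool) :
    (b.map (cond · u v)).flatten.length ≤ (u.length + v.length) * b.length := by
  induction b with
  | nil => simp
  | cons t b ih =>
    rw [List.map_cons, List.flatten_cons, List.length_append, List.length_cons, mul_add_one]
    cases t <;> simp only [cond_true, cond_false] <;> omega

theorem flatten_map_cond_injective {u v : List A} (huv : ¬ u <+: v) (hvu : ¬ v <+: u) :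
    Function.Injective fun b : List Bool => (b.map (cond · u v)).flatten := by
  have hne : ∀ t, cond t u v ≠ [] := by
    rintro (_ | _) h <;> simp only [cond_true, cond_false] at h <;> simp_all
  have hcond : ∀ t t', cond t u v <+: cond t' u v ∨ cond t' u v <+: cond t u v → t = t' := by
    rintro (_ | _) (_ | _) <;> simp_all
  intro b₁
  induction b₁ with
  | nil =>
    rintro (_ | ⟨t, b₂⟩) h
    · rfl
    · exact absurd (List.append_eq_nil_iff.1 h.symm).1 (hne t)
  | cons t₁ b₁ ih =>
    rintro (_ | ⟨t₂, b₂⟩) h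
    · exact absurd (List.append_eq_nil_iff.1 h).1 (hne t₁)
    · simp only [List.map_cons, List.flatten_cons] at h
      obtain rfl := hcond t₁ t₂ (List.prefix_or_prefix_of_prefix ⟨_, h⟩ ⟨_, rfl⟩)
      rw [ih (List.append_cancel_left h)]

end Words

namespace Language

variable {A : Type*}

theorem mem_singleton_kstar {w x : List A} :
    x ∈ ({w} : Language A)∗ ↔ ∃ m, x = (List.replicate m w).flatten := by
  rw [Language.mem_kstar]
  constructor
  · rintro ⟨L, rfl, hL⟩
    exact ⟨L.length, congrArg List.flatten (List.eq_replicate_iff.2 ⟨rfl, hL⟩)⟩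
  · rintro ⟨m, rfl⟩
    exact ⟨_, rfl, fun y hy => List.eq_of_mem_replicate hy⟩

theorem exists_le_length_of_mem_singleton_kstar {w x : List A}
    (hx : x ∈ ({w} : Language A)∗) : ∃ m ≤ x.length, x = (List.replicate m w).flatten := by
  obtain ⟨m, rfl⟩ := mem_singleton_kstar.1 hx
  rcases eq_or_ne w [] with rfl | hw
  · exact ⟨0, by simp⟩
  · refine ⟨m, ?_, rfl⟩
    simpa using Nat.le_mul_of_pos_right m (List.length_pos_iff.2 hw)

theorem le_singleton_kstar_of_forall_prefix {C : Language A} {x : List A} (hx : x ≠ [])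
    (hres : ∀ d, x ++ d ∈ C → d ∈ C) (hpre : ∀ c ∈ C, c ≠ [] → x <+: c) :
    C ≤ ({x} : Language A)∗ := by
  intro c hc
  induction hn : c.length using Nat.strong_induction_on generalizing c with
  | _ n ih =>
    rcases eq_or_ne c [] with rfl | hne
    · exact nil_mem_kstar _
    obtain ⟨d, rfl⟩ := hpre c hc hne
    have hd : d ∈ ({x} : Language A)∗ :=
      ih d.length (by simp [← hn, List.length_pos_iff.2 hx]) (hres d hc) rfl
    rw [← one_add_self_mul_kstar_eq_kstar]
    exact Or.inr (append_mem_mul rfl hd)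

/-- The witness is the shortest nonempty word of `C`. -/
theorem exists_le_singleton_kstar {C : Language A}
    (hcomp : ∀ u ∈ C, ∀ v ∈ C, u <+: v ∨ v <+: u)
    (hres : ∀ x ∈ C, ∀ d, x ++ d ∈ C → d ∈ C) : ∃ x, C ≤ ({x} : Language A)∗ := by
  by_cases hC : ∃ x ∈ C, x ≠ []
  · obtain ⟨x₀, hx₀⟩ := hC
    let x := Function.argminOn List.length {x | x ∈ C ∧ x ≠ []} ⟨x₀, hx₀⟩
    have hx : x ∈ {x | x ∈ C ∧ x ≠ []} := Function.argminOn_mem _ _ _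
    refine ⟨x, le_singleton_kstar_of_forall_prefix hx.2 (hres x hx.1) fun c hc hne => ?_⟩
    have hle : x.length ≤ c.length :=
      Function.argminOn_le List.length {x | x ∈ C ∧ x ≠ []} (a := c) ⟨hc, hne⟩
    rcases hcomp x hx.1 c hc with h | h
    · exact h
    · rw [h.eq_of_length (le_antisymm h.length_le hle)]
  · push Not at hC
    refine ⟨[], fun c hc => ?_⟩
    rw [hC c hc]
    exact nil_mem_kstar _

def lengthLE (n : ℕ) : Language A :=
  {x | x.length ≤ n}

@[simp]
theorem mem_lengthLE {n : ℕ} {x : List A} :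
    x ∈ (lengthLE n : Language A) ↔ x.length ≤ n :=
  Iff.rfl

end Language

section ProdStars

variable {A : Type*}

theorem prodStars_cons (w : List A) (ws : List (List A)) :
    prodStars (w :: ws) = ({w} : Language A)∗ * prodStars ws := by
  simp [prodStars]

theorem prodStars_append (ws₁ ws₂ : List (List A)) :
    prodStars (ws₁ ++ ws₂) = prodStars ws₁ * prodStars ws₂ := by
  simp [prodStars]

theorem one_le_prodStars (ws : List (List A)) : 1 ≤ prodStars ws := by
  induction ws with
  | nil => simp [prodStars]
  | cons w ws ih => rw [prodStars_cons]; exact one_le_mul one_le_kstar ih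

theorem singleton_kstar_le_prodStars {w : List A} {ws : List (List A)} (h : w ∈ ws) :
    ({w} : Language A)∗ ≤ prodStars ws := by
  obtain ⟨ws₁, ws₂, rfl⟩ := List.append_of_mem h
  rw [prodStars_append, prodStars_cons]
  calc ({w} : Language A)∗ = 1 * (({w} : Language A)∗ * 1) := by simp
    _ ≤ _ := mul_le_mul' (one_le_prodStars _) (mul_le_mul' le_rfl (one_le_prodStars _))

/-- Words of length at most `N` in `w₁*⋯wₙ*` are determined by exponents `≤ N`. -/
theorem prodStars_exists_finset (ws : List (List A)) (N : ℕ) :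
    ∃ F : Finset (List A), F.card ≤ (N + 1) ^ ws.length ∧
      ∀ x ∈ prodStars ws, x.length ≤ N → x ∈ F := by
  classical
  induction ws with
  | nil => exact ⟨{[]}, by simp, fun x hx _ => by simpa [prodStars] using hx⟩
  | cons w ws ih =>
    obtain ⟨F, hcard, hF⟩ := ih
    refine ⟨(Finset.range (N + 1) ×ˢ F).image fun p => (List.replicate p.1 w).flatten ++ p.2,
      ?_, ?_⟩
    · calc _ ≤ (Finset.range (N + 1) ×ˢ F).card := Finset.card_image_le
        _ ≤ (N + 1) * (N + 1) ^ ws.length := by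
          rw [Finset.card_product, Finset.card_range]; exact Nat.mul_le_mul_left _ hcard
        _ = (N + 1) ^ (w :: ws).length := by rw [List.length_cons, pow_succ']
    · rintro _ hx hlen
      rw [prodStars_cons] at hx
      obtain ⟨c, hc, y, hy, rfl⟩ := hx
      obtain ⟨m, hm, rfl⟩ := Language.exists_le_length_of_mem_singleton_kstar hc
      rw [List.length_append] at hlen
      exact Finset.mem_image.2 ⟨(m, y), Finset.mem_product.2
        ⟨Finset.mem_range.2 (by omega), hF y hy (by omega)⟩, rfl⟩

end ProdStars

namespace Language

variable {A : Type*}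

def IsBounded (L : Language A) : Prop :=
  ∃ ws : List (List A), L ≤ prodStars ws

theorem IsBounded.mono {L L' : Language A} (h : L ≤ L') (hL' : L'.IsBounded) : L.IsBounded :=
  hL'.imp fun _ hws => h.trans hws

theorem isBounded_one : (1 : Language A).IsBounded :=
  ⟨[], one_le_prodStars _⟩

theorem IsBounded.mul {L L' : Language A} (hL : L.IsBounded) (hL' : L'.IsBounded) :
    (L * L').IsBounded := by
  obtain ⟨ws, hws⟩ := hL
  obtain ⟨ws', hws'⟩ := hL'
  exact ⟨ws ++ ws', prodStars_append ws ws' ▸ mul_le_mul' hws hws'⟩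

theorem IsBounded.pow {L : Language A} (hL : L.IsBounded) (n : ℕ) : (L ^ n).IsBounded := by
  induction n with
  | zero => simpa using isBounded_one
  | succ n ih => rw [pow_succ]; exact ih.mul hL

/-- A bounded language has polynomial growth. -/
theorem IsBounded.exists_finset {L : Language A} (hL : L.IsBounded) :
    ∃ d : ℕ, ∀ N : ℕ, ∃ F : Finset (List A), F.card ≤ (N + 1) ^ d ∧
      ∀ x ∈ L, x.length ≤ N → x ∈ F := by
  obtain ⟨ws, hws⟩ := hL
  refine ⟨ws.length, fun N => ?_⟩
  obtain ⟨F, hcard, hF⟩ := prodStars_exists_finset ws N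
  exact ⟨F, hcard, fun x hx => hF x (hws hx)⟩

/-- `p{u,v}*s` has exponential growth, so no bounded language contains it. -/
theorem not_isBounded_of_forall_mem {L : Language A} {p u v s : List A}
    (huv : ¬ u <+: v) (hvu : ¬ v <+: u)
    (hL : ∀ b : List Bool, p ++ (b.map (cond · u v)).flatten ++ s ∈ L) : ¬ L.IsBounded := by
  intro hbdd
  obtain ⟨d, hd⟩ := hbdd.exists_finset
  obtain ⟨k, hk⟩ := exists_pow_lt_two_pow (u.length + v.length) (p.length + s.length + 1) d
  obtain ⟨F, hcard, hF⟩ := hd ((u.length + v.length) * k + (p.length + s.length))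
  let word : (Fin k → Bool) → List A := fun f =>
    p ++ ((List.ofFn f).map (cond · u v)).flatten ++ s
  have hword : Set.InjOn word (Finset.univ : Finset (Fin k → Bool)) := fun f _ g _ h =>
    List.ofFn_injective (flatten_map_cond_injective huv hvu
      (List.append_cancel_left (List.append_cancel_right h)))
  have hmaps : Set.MapsTo word (Finset.univ : Finset (Fin k → Bool)) F := by
    intro f _
    refine hF _ (hL _) ?_
    have := length_flatten_map_cond_le u v (List.ofFn f)
    simp only [List.length_ofFn] at this
    simp only [word, List.length_append]
    omega
  have := Finset.card_le_card_of_injOn word hmaps hword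
  simp only [Finset.card_univ, Fintype.card_fun, Fintype.card_bool, Fintype.card_fin] at this
  rw [← add_assoc] at hk
  omega

theorem isBounded_lengthLE_one [Fintype A] :
    (lengthLE 1 : Language A).IsBounded := by
  classical
  refine ⟨(Finset.univ : Finset A).toList.map ([·]), fun x hx => ?_⟩
  replace hx : x.length ≤ 1 := hx
  rcases x with _ | ⟨a, _ | _⟩
  · exact one_le_prodStars _ rfl
  · refine singleton_kstar_le_prodStars
      (List.mem_map_of_mem (Finset.mem_toList.2 (Finset.mem_univ a))) ?_
    exact mem_singleton_kstar.2 ⟨1, by simp⟩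
  · exact absurd hx (by simp)

end Language

namespace DFA

variable {A σ : Type*} (M : DFA A σ)

theorem evalFrom_flatten_of_forall {q : σ} {l : List (List A)}
    (h : ∀ w ∈ l, M.evalFrom q w = q) : M.evalFrom q l.flatten = q := by
  induction l with
  | nil => rfl
  | cons w l ih =>
    rw [List.flatten_cons, evalFrom_of_append, h w List.mem_cons_self]
    exact ih fun w hw => h w (List.mem_cons_of_mem _ hw)

theorem not_isBounded_accepts {q : σ} {p u v s : List A}
    (hp : M.evalFrom M.start p = q) (hs : M.evalFrom q s ∈ M.accept)
    (hu : M.evalFrom q u = q) (hv : M.evalFrom q v = q) (huv : ¬ u <+: v) (hvu : ¬ v <+: u) :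
    ¬ M.accepts.IsBounded := by
  refine Language.not_isBounded_of_forall_mem (p := p) (s := s) huv hvu fun b => ?_
  have hcycle : M.evalFrom q (b.map (cond · u v)).flatten = q := by
    refine M.evalFrom_flatten_of_forall ?_
    simp only [List.mem_map]
    rintro _ ⟨(_ | _), -, rfl⟩
    exacts [hv, hu]
  rw [mem_accepts, eval, evalFrom_of_append, evalFrom_of_append, hp, hcycle]
  exact hs

def IsUseful (q : σ) : Prop :=
  (∃ p, M.evalFrom M.start p = q) ∧ ∃ s, M.evalFrom q s ∈ M.accept

def HasComparableCycles : Prop :=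
  ∀ q, M.IsUseful q → ∀ u v, M.evalFrom q u = q → M.evalFrom q v = q → u <+: v ∨ v <+: u

def usefulCycles : Language A :=
  {c | ∃ q, M.IsUseful q ∧ M.evalFrom q c = q}

theorem HasComparableCycles.isBounded_usefulCycles [Fintype σ] (hM : M.HasComparableCycles) :
    M.usefulCycles.IsBounded := by
  classical
  have hcyc (q : σ) (hq : M.IsUseful q) :
      ∃ x, ({c | M.evalFrom q c = q} : Language A) ≤ ({x} : Language A)∗ := by
    refine Language.exists_le_singleton_kstar (fun u hu v hv => hM q hq u v hu hv)
      fun x hx d hd => ?_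
    change M.evalFrom q (x ++ d) = q at hd
    rwa [evalFrom_of_append, hx] at hd
  choose! x hx using hcyc
  refine ⟨(Finset.univ : Finset σ).toList.map x, ?_⟩
  rintro c ⟨q, hq, hc⟩
  exact singleton_kstar_le_prodStars
    (List.mem_map_of_mem (Finset.mem_toList.2 (Finset.mem_univ q))) (hx q hq hc)

theorem exists_eq_append_last_return (q : σ) (w : List A) :
    ∃ c w', w = c ++ w' ∧ M.evalFrom q c = q ∧
      ∀ t, t <+: w' → t ≠ [] → M.evalFrom q t ≠ q := by
  induction w using List.reverseRecOn with
  | nil => exact ⟨[], [], rfl, rfl, fun t ht hne => absurd (List.prefix_nil.1 ht) hne⟩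
  | append_singleton w a ih =>
    obtain ⟨c, w', rfl, hc, hw'⟩ := ih
    by_cases hret : M.evalFrom q (c ++ w' ++ [a]) = q
    · exact ⟨c ++ w' ++ [a], [], by simp, hret, fun t ht hne => absurd (List.prefix_nil.1 ht) hne⟩
    · refine ⟨c, w' ++ [a], by simp, hc, fun t ht _ => ?_⟩
      rcases List.prefix_concat_iff.1 ht with rfl | ht
      · rwa [List.append_assoc, evalFrom_of_append, hc] at hret
      · exact hw' t ht ‹_›

/-- A run that avoids the states in `S` visits each state outside `S` in one block: a cycle
followed by at most one letter leaving that state for good. -/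
theorem mem_pow_of_avoids [Fintype σ] [DecidableEq σ] (n : ℕ) :
    ∀ (S : Finset σ) (q : σ) (w : List A), Sᶜ.card ≤ n → (∃ p, M.evalFrom M.start p = q) →
      M.evalFrom q w ∈ M.accept → (∀ t, t <+: w → M.evalFrom q t ∉ S) →
      w ∈ (M.usefulCycles * Language.lengthLE 1) ^ n := by
  induction n with
  | zero =>
    intro S q w hcard _ _ havoid
    have hq : q ∈ Sᶜ := Finset.mem_compl.2 (havoid [] List.nil_prefix)
    exact absurd (Finset.card_pos.2 ⟨q, hq⟩) (by omega)
  | succ n ih =>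
    intro S q w hcard hreach hacc havoid
    obtain ⟨c, w', rfl, hc, hw'⟩ := M.exists_eq_append_last_return q w
    have hacc' : M.evalFrom q w' ∈ M.accept := by rwa [evalFrom_of_append, hc] at hacc
    have hq : M.IsUseful q := ⟨hreach, w', hacc'⟩
    have hcyc : c ∈ M.usefulCycles := ⟨q, hq, hc⟩
    rcases w' with _ | ⟨a, w''⟩
    · have hone : 1 ≤ M.usefulCycles * Language.lengthLE 1 := by
        rintro _ rfl
        exact Language.append_mem_mul (show [] ∈ M.usefulCycles from ⟨q, hq, rfl⟩) (by simp)
      exact le_self_pow hone n.succ_ne_zero (Language.append_mem_mul hcyc (by simp))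
    rw [← List.singleton_append, ← List.append_assoc, pow_succ']
    refine Language.append_mem_mul (Language.append_mem_mul hcyc (by simp)) ?_
    refine ih (insert q S) (M.step q a) w'' ?_ ?_ hacc' fun t ht => ?_
    · have hq : q ∈ Sᶜ := Finset.mem_compl.2 (havoid [] List.nil_prefix)
      rw [Finset.compl_insert, Finset.card_erase_of_mem hq]
      omega
    · obtain ⟨p, hp⟩ := hreach
      exact ⟨p ++ c ++ [a], by rw [evalFrom_of_append, evalFrom_of_append, hp, hc,
        evalFrom_singleton]⟩
    · have hnew : M.evalFrom q (a :: t) ≠ q :=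
        hw' _ (List.cons_prefix_cons.2 ⟨rfl, ht⟩) (List.cons_ne_nil _ _)
      have hold := havoid (c ++ a :: t)
        (List.prefix_append_right_inj c |>.2 (List.cons_prefix_cons.2 ⟨rfl, ht⟩))
      rw [evalFrom_of_append, hc] at hold
      exact Finset.mem_insert.not.2 (not_or.2 ⟨hnew, hold⟩)

theorem HasComparableCycles.isBounded_accepts [Fintype A] [Fintype σ]
    (hM : M.HasComparableCycles) : M.accepts.IsBounded := by
  classical
  refine ((hM.isBounded_usefulCycles.mul Language.isBounded_lengthLE_one).pow
    (Fintype.card σ)).mono fun w hw => ?_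
  exact M.mem_pow_of_avoids _ ∅ M.start w (by simp) ⟨[], rfl⟩ hw (by simp)

end DFA

/-- L(M) is bounded iff M has no reachable, co-reachable state with two
prefix-incomparable cycle words. -/
theorem accepts_bounded_iff {A σ : Type*} [Fintype A] [Fintype σ] (M : DFA A σ) :
    (∃ ws : List (List A), M.accepts ≤ prodStars ws) ↔
      ¬ ∃ (q : σ) (p u v s : List A),
        M.evalFrom M.start p = q ∧
        M.evalFrom q s ∈ M.accept ∧
        M.evalFrom q u = q ∧
        M.evalFrom q v = q ∧
        ¬ u <+: v ∧ ¬ v <+: u := by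
  constructor
  · rintro hbdd ⟨q, p, u, v, s, hp, hs, hu, hv, huv, hvu⟩
    exact M.not_isBounded_accepts hp hs hu hv huv hvu hbdd
  · intro h
    refine DFA.HasComparableCycles.isBounded_accepts M fun q ⟨⟨p, hp⟩, s, hs⟩ u v hu hv => ?_
    by_contra! hcomp
    exact h ⟨q, p, u, v, s, hp, hs, hu, hv, hcomp⟩
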